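/- The generating function of the (1,0)-entries of the bi-periodic Jacobsthal matrix sequence, which is the bi-periodic Jacobsthal sequence itself, satisfies (1 − (ab+4)x² + 4x⁴)·∑_{m≥0} j_m x^m = x + a·x² − 2·x³ as formal power series over ℝ. -/

import Mathlib

noncomputable def jj (a b : ℝ) : ℕ → ℝ
  | 0 => 0
  | 1 => 1
  | n + 2 => (if Even (n + 2) then a else b) * jj a b (n + 1) + 2 * jj a b n

/-! The two recurrence steps starting at an index `n` use the multipliers `a` and `b` in some
order, so two steps compose to `j (n + 4) = (a b + 4) j (n + 2) - 4 j n` regardless of the parity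
of `n`. Hence multiplying the generating function by `1 - (a b + 4) x² + 4 x⁴` kills every coefficient
beyond degree 3. -/

section Jacobsthal

variable (a b : ℝ)

lemma jj_add_two (n : ℕ) :
    jj a b (n + 2) = (if Even n then a else b) * jj a b (n + 1) + 2 * jj a b n := by
  simp [jj, Nat.even_add]

lemma jj_add_four (n : ℕ) :
    jj a b (n + 4) = (a * b + 4) * jj a b (n + 2) - 4 * jj a b n := by
  set c := if Even n then a else b
  set d := if Even (n + 1) then a else b
  have hcd : c * d = a * b := by
    by_cases h : Even n <;> simp [c, d, h, Nat.even_add_one, mul_comm]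
  have hstep₂ : jj a b (n + 2) = c * jj a b (n + 1) + 2 * jj a b n := jj_add_two a b n
  have hstep₃ : jj a b (n + 3) = d * jj a b (n + 2) + 2 * jj a b (n + 1) := jj_add_two a b (n + 1)
  have hstep₄ : jj a b (n + 4) = c * jj a b (n + 3) + 2 * jj a b (n + 2) := by
    simpa [c, Nat.even_add] using jj_add_two a b (n + 2)
  linear_combination hstep₄ + c * hstep₃ - 2 * hstep₂ + jj a b (n + 2) * hcd

end Jacobsthal

namespace PowerSeries

lemma coeff_quartic_mul_mk {R : Type*} [CommRing R] (r s : R) (u : ℕ → R) (n : ℕ) :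
    coeff n ((1 - C r * X ^ 2 + C s * X ^ 4) * mk u) =
      u n - (if 2 ≤ n then r * u (n - 2) else 0) + (if 4 ≤ n then s * u (n - 4) else 0) := by
  simp only [add_mul, sub_mul, one_mul, mul_assoc, map_add, map_sub, coeff_C_mul,
    coeff_X_pow_mul', coeff_mk]
  split_ifs <;> ring

end PowerSeries

open PowerSeries in
theorem stmt6 (a b : ℝ) :
    (1 - C (R := ℝ) (a * b + 4) * X ^ 2 + C (R := ℝ) 4 * X ^ 4) * PowerSeries.mk (jj a b)
      = X + C (R := ℝ) a * X ^ 2 - C (R := ℝ) 2 * X ^ 3 := by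
  ext n
  rw [coeff_quartic_mul_mk]
  match n with
  | 0 => simp [jj]
  | 1 => simp [jj, coeff_X_pow]
  | 2 => simp [jj, coeff_X, coeff_X_pow]
  | 3 => simp [jj, Nat.even_iff, coeff_X, coeff_X_pow]; ring
  | n + 4 => simp [jj_add_four, coeff_X, coeff_X_pow]
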